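/- Let T be a tree on n vertices and let k be a positive integer with k ≤ n − γ(T). Then k ≤ Sb_k(T) ≤ 2k; that is, some set of at most 2k edges of T has removal increasing the domination number by exactly k, and no set of fewer than k edges does. -/

import Mathlib

/-- A finite set of vertices `D` is a dominating set of `G` if every vertex
is in `D` or adjacent to a vertex in `D`. -/
def SimpleGraph.IsDominatingSet {V : Type*} (G : SimpleGraph V) (D : Finset V) : Prop :=
  ∀ v : V, v ∈ D ∨ ∃ u ∈ D, G.Adj u v

/-- The domination number of `G`: the minimum cardinality of a dominating set. -/
noncomputable def SimpleGraph.domNum {V : Type*} (G : SimpleGraph V) : ℕ :=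
  sInf {n : ℕ | ∃ D : Finset V, G.IsDominatingSet D ∧ D.card = n}

/-- The `k`-synchronous bondage number of `G`: the minimum cardinality of a set of edges
whose deletion increases the domination number by exactly `k`.  (`Sb 1` is the classical
bondage number.) -/
noncomputable def SimpleGraph.synchBondage {V : Type*} (G : SimpleGraph V) (k : ℕ) : ℕ :=
  sInf {m : ℕ | ∃ E' : Finset (Sym2 V), ↑E' ⊆ G.edgeSet ∧
    (G.deleteEdges ↑E').domNum = G.domNum + k ∧ E'.card = m}

/-!
Iterate the following step on the forests `T - E`: a forest `F` with an edge has a set of at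
most two edges whose deletion raises `γ` by exactly one. Take a longest path `c v …`; then `c`
is a leaf at `v`, and every neighbour of `v` off the path is again a leaf at `v`. If `v` carries
two leaves, deleting their two pendant edges isolates both, and swapping them for `v` in a
dominating set of the smaller graph shows `γ` went up. Otherwise `v` has degree at most two, and
deleting the edges at `v` isolates `c` and `v`. In both cases `γ` rises by at least one, and since
deleting a single edge raises `γ` by at most one, some subset of the deleted edges raises it by
exactly one. The same single-edge bound gives `γ (T - E) ≤ γ T + |E|`, hence `k ≤ Sb_k`.
-/

open Finset

namespace SimpleGraph

variable {V : Type*} {G : SimpleGraph V}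

theorem IsDominatingSet.domNum_le_card {D : Finset V} (hD : G.IsDominatingSet D) :
    G.domNum ≤ D.card :=
  Nat.sInf_le ⟨D, hD, rfl⟩

theorem IsDominatingSet.mem_of_forall_not_adj {D : Finset V} (hD : G.IsDominatingSet D) {u : V}
    (hu : ∀ y, ¬G.Adj u y) : u ∈ D :=
  (hD u).resolve_right fun ⟨d, _, hdu⟩ => hu d hdu.symm

theorem not_deleteEdges_adj {s : Set (Sym2 V)} {u : V} (hu : ∀ y, G.Adj u y → s(u, y) ∈ s)
    (y : V) : ¬(G.deleteEdges s).Adj u y := fun h =>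
  ((deleteEdges_adj ..).1 h).2 (hu y ((deleteEdges_adj ..).1 h).1)

theorem deleteEdges_coe_insert [DecidableEq V] (G : SimpleGraph V) (e : Sym2 V)
    (E : Finset (Sym2 V)) :
    G.deleteEdges ↑(insert e E) = (G.deleteEdges ↑E).deleteEdges {e} := by
  rw [deleteEdges_deleteEdges, coe_insert, Set.union_singleton]

section Domination

variable [Fintype V]

theorem exists_isDominatingSet_card_eq_domNum (G : SimpleGraph V) :
    ∃ D : Finset V, G.IsDominatingSet D ∧ D.card = G.domNum :=
  Nat.sInf_mem (s := {n | ∃ D : Finset V, G.IsDominatingSet D ∧ D.card = n})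
    ⟨_, univ, fun v => Or.inl (mem_univ v), rfl⟩

theorem exists_adj_of_domNum_lt_card (h : G.domNum < Fintype.card V) : ∃ u v, G.Adj u v := by
  obtain ⟨D, hD, hcard⟩ := G.exists_isDominatingSet_card_eq_domNum
  obtain ⟨v, hv⟩ : ∃ v, v ∉ D := by
    by_contra! hall
    rw [eq_univ_iff_forall.2 hall, card_univ] at hcard
    omega
  obtain ⟨u, -, huv⟩ := (hD v).resolve_left hv
  exact ⟨u, v, huv⟩

theorem domNum_deleteEdges_singleton_le (G : SimpleGraph V) (e : Sym2 V) :
    (G.deleteEdges {e}).domNum ≤ G.domNum + 1 := by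
  classical
  induction e using Sym2.ind with | _ u v => ?_
  obtain ⟨D, hD, hcard⟩ := G.exists_isDominatingSet_card_eq_domNum
  -- `u` can only lose its dominator if `u ∉ D`, and `v` only if `u ∈ D`
  set w := if u ∈ D then v else u
  suffices (G.deleteEdges {s(u, v)}).IsDominatingSet (insert w D) from
    hcard ▸ this.domNum_le_card.trans (card_insert_le w D)
  intro x
  rcases hD x with hx | ⟨d, hd, hdx⟩
  · exact Or.inl (mem_insert_of_mem hx)
  by_cases he : s(d, x) = s(u, v)
  · left
    rcases Sym2.eq_iff.1 he with ⟨rfl, rfl⟩ | ⟨rfl, rfl⟩ <;> by_cases x ∈ D <;> simp_all [w]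
  · exact Or.inr ⟨d, mem_insert_of_mem hd, (deleteEdges_adj ..).2 ⟨hdx, by simpa using he⟩⟩

theorem domNum_deleteEdges_le_add_card (G : SimpleGraph V) (E : Finset (Sym2 V)) :
    (G.deleteEdges E).domNum ≤ G.domNum + E.card := by
  classical
  induction E using Finset.induction_on with
  | empty => simp
  | insert e E he ih =>
    rw [deleteEdges_coe_insert, card_insert_of_notMem he]
    have := (G.deleteEdges E).domNum_deleteEdges_singleton_le e
    omega

theorem exists_subset_domNum_deleteEdges_eq {j : ℕ} {E : Finset (Sym2 V)}
    (h : G.domNum + j ≤ (G.deleteEdges E).domNum) :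
    ∃ E' ⊆ E, (G.deleteEdges E').domNum = G.domNum + j := by
  classical
  induction E using Finset.induction_on with
  | empty => exact ⟨∅, subset_rfl, by simp at h ⊢; omega⟩
  | insert e E he ih =>
    by_cases hE : G.domNum + j ≤ (G.deleteEdges E).domNum
    · obtain ⟨E', hE'E, hE'⟩ := ih hE
      exact ⟨E', hE'E.trans (subset_insert e E), hE'⟩
    · refine ⟨insert e E, subset_rfl, le_antisymm ?_ h⟩
      have := (G.deleteEdges E).domNum_deleteEdges_singleton_le e
      rw [deleteEdges_coe_insert]
      omega

theorem add_one_le_domNum_of_le {H : SimpleGraph V} (hle : H ≤ G) {u x v : V} (hux : u ≠ x)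
    (hu : ∀ y, ¬H.Adj u y) (hx : ∀ y, ¬H.Adj x y) (hvu : v = u ∨ G.Adj v u)
    (hvx : v = x ∨ G.Adj v x) :
    G.domNum + 1 ≤ H.domNum := by
  classical
  obtain ⟨D, hD, hcard⟩ := H.exists_isDominatingSet_card_eq_domNum
  set D' := insert v ((D.erase u).erase x)
  have near : ∀ y, v = y ∨ G.Adj v y → y ∈ D' ∨ ∃ d ∈ D', G.Adj d y := by
    rintro y (rfl | h)
    · exact Or.inl (mem_insert_self _ _)
    · exact Or.inr ⟨v, mem_insert_self _ _, h⟩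
  have hdom : G.IsDominatingSet D' := by
    intro y
    by_cases hyu : y = u
    · exact near y (hyu ▸ hvu)
    by_cases hyx : y = x
    · exact near y (hyx ▸ hvx)
    rcases hD y with hy | ⟨d, hd, hdy⟩
    · exact Or.inl (mem_insert_of_mem (mem_erase.2 ⟨hyx, mem_erase.2 ⟨hyu, hy⟩⟩))
    · have hdu : d ≠ u := by rintro rfl; exact hu y hdy
      have hdx : d ≠ x := by rintro rfl; exact hx y hdy
      exact Or.inr ⟨d, mem_insert_of_mem (mem_erase.2 ⟨hdx, mem_erase.2 ⟨hdu, hd⟩⟩), hle hdy⟩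
  have huD := hD.mem_of_forall_not_adj hu
  have hxD : x ∈ D.erase u := mem_erase.2 ⟨hux.symm, hD.mem_of_forall_not_adj hx⟩
  have hins : D'.card ≤ ((D.erase u).erase x).card + 1 := card_insert_le _ _
  have := hdom.domNum_le_card
  have := card_erase_add_one hxD
  have := card_erase_add_one huD
  omega

end Domination

def IsLeafAt (G : SimpleGraph V) (u v : V) : Prop :=
  G.Adj u v ∧ ∀ w, G.Adj u w → w = v

def Walk.IsLongestPath {u v : V} (p : G.Walk u v) : Prop :=
  p.IsPath ∧ ∀ a b (q : G.Walk a b), q.IsPath → q.length ≤ p.length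

theorem exists_isLongestPath [Finite V] [Nonempty V] (G : SimpleGraph V) :
    ∃ (u v : V) (p : G.Walk u v), p.IsLongestPath := by
  classical
  have := Fintype.ofFinite V
  have : Nonempty (Σ u v, G.Path u v) := ⟨⟨Classical.arbitrary V, _, Path.nil⟩⟩
  obtain ⟨⟨u, v, p⟩, hp⟩ := Finite.exists_max fun p : Σ u v, G.Path u v => p.2.2.1.length
  exact ⟨u, v, p, p.2, fun a b q hq => hp ⟨a, b, q, hq⟩⟩

namespace Walk.IsLongestPath

variable {u v w : V} {p : G.Walk u v}

theorem mem_support_of_adj_start (hp : p.IsLongestPath) (hadj : G.Adj u w) : w ∈ p.support := by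
  by_contra hw
  have := hp.2 _ _ (cons hadj.symm p) (hp.1.cons hw)
  simp at this

theorem isLeafAt_snd (hp : p.IsLongestPath) (hG : G.IsAcyclic) (hnil : ¬p.Nil) :
    G.IsLeafAt u p.snd :=
  ⟨p.adj_snd hnil, fun _ hw => hG.eq_snd_of_adj_start hp.1 hw (hp.mem_support_of_adj_start hw)⟩

end Walk.IsLongestPath

theorem IsAcyclic.exists_isLeafAt [Finite V] (hG : G.IsAcyclic) {a b : V} (hab : G.Adj a b) :
    ∃ u v w, G.IsLeafAt u v ∧ ∀ y, G.Adj v y → y = u ∨ y = w ∨ G.IsLeafAt y v := by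
  have : Nonempty V := ⟨a⟩
  obtain ⟨c, d, p, hp⟩ := G.exists_isLongestPath
  cases p with
  | nil =>
    have := hp.2 _ _ (Walk.cons hab .nil) (by simp [hab.ne])
    simp at this
  | @cons _ v _ hcv q =>
    have hq := (Walk.cons_isPath_iff hcv q).1 hp.1
    refine ⟨c, v, q.snd, by simpa using hp.isLeafAt_snd hG Walk.not_nil_cons, fun y hvy => ?_⟩
    by_cases hyc : y = c
    · exact Or.inl hyc
    by_cases hyq : y ∈ q.support
    · exact Or.inr (Or.inl (hG.eq_snd_of_adj_start hq.1 hvy hyq))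
    · -- replacing `c` by `y` gives another longest path
      have hp' : (Walk.cons hvy.symm q).IsLongestPath :=
        ⟨hq.1.cons hyq, fun a b r hr => by simpa using hp.2 a b r hr⟩
      exact Or.inr (Or.inr (by simpa using hp'.isLeafAt_snd hG Walk.not_nil_cons))

theorem IsAcyclic.exists_deleteEdges_domNum_eq_add_one [Fintype V] (hG : G.IsAcyclic) {a b : V}
    (hab : G.Adj a b) :
    ∃ E : Finset (Sym2 V), ↑E ⊆ G.edgeSet ∧ E.card ≤ 2 ∧
      (G.deleteEdges E).domNum = G.domNum + 1 := by
  classical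
  suffices ∃ E : Finset (Sym2 V), ↑E ⊆ G.edgeSet ∧ E.card ≤ 2 ∧
      G.domNum + 1 ≤ (G.deleteEdges E).domNum by
    obtain ⟨E, hEG, hE2, hE⟩ := this
    obtain ⟨E', hE'E, hE'⟩ := exists_subset_domNum_deleteEdges_eq hE
    exact ⟨E', (coe_subset.2 hE'E).trans hEG, (card_le_card hE'E).trans hE2, hE'⟩
  obtain ⟨u, v, w, hu, hv⟩ := hG.exists_isLeafAt hab
  by_cases hsib : ∃ x ≠ u, G.IsLeafAt x v
  · obtain ⟨x, hxu, hx⟩ := hsib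
    refine ⟨{s(u, v), s(x, v)}, ?_, card_le_two,
      add_one_le_domNum_of_le (deleteEdges_le _) hxu.symm (not_deleteEdges_adj fun y hy => ?_)
        (not_deleteEdges_adj fun y hy => ?_) (.inr hu.1.symm) (.inr hx.1.symm)⟩
    · simp [Set.insert_subset_iff, hu.1, hx.1]
    · simp [hu.2 y hy]
    · simp [hx.2 y hy]
  · have hN : G.neighborFinset v ⊆ {u, w} := fun y hy => by
      rcases hv y ((mem_neighborFinset ..).1 hy) with rfl | rfl | hy'
      · simp
      · simp
      · simp [show y = u from by_contra fun h => hsib ⟨y, h, hy'⟩]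
    refine ⟨G.incidenceFinset v, by simpa using G.incidenceSet_subset v, ?_,
      add_one_le_domNum_of_le (deleteEdges_le _) hu.1.ne (not_deleteEdges_adj fun y hy => ?_)
        (not_deleteEdges_adj fun y hy => ?_) (.inr hu.1.symm) (.inl rfl)⟩
    · rw [card_incidenceFinset_eq_degree, ← card_neighborFinset_eq_degree]
      exact (card_le_card hN).trans card_le_two
    · simp [hu.2 y hy, incidenceSet, hu.1]
    · simp [incidenceSet, hy]

theorem IsAcyclic.exists_deleteEdges_domNum_eq_add [Fintype V] (hG : G.IsAcyclic) {j : ℕ}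
    (hj : j ≤ Fintype.card V - G.domNum) :
    ∃ E : Finset (Sym2 V), ↑E ⊆ G.edgeSet ∧ E.card ≤ 2 * j ∧
      (G.deleteEdges E).domNum = G.domNum + j := by
  classical
  induction j generalizing G with
  | zero => exact ⟨∅, by simp, by simp, by simp⟩
  | succ j ih =>
    obtain ⟨a, b, hab⟩ := exists_adj_of_domNum_lt_card (G := G) (by omega)
    obtain ⟨E₁, hE₁G, hE₁, hdom₁⟩ := hG.exists_deleteEdges_domNum_eq_add_one hab
    obtain ⟨E₂, hE₂G, hE₂, hdom₂⟩ :=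
      ih (G := G.deleteEdges E₁) (hG.anti (deleteEdges_le _)) (by rw [hdom₁]; omega)
    refine ⟨E₁ ∪ E₂, ?_, (card_union_le _ _).trans (by omega), ?_⟩
    · rw [coe_union]
      exact Set.union_subset hE₁G (hE₂G.trans (edgeSet_subset_edgeSet.2 (deleteEdges_le _)))
    · rw [coe_union, ← deleteEdges_deleteEdges, hdom₂, hdom₁]
      ring

theorem synchBondage_le {k : ℕ} {E : Finset (Sym2 V)} (hE : ↑E ⊆ G.edgeSet)
    (hdom : (G.deleteEdges E).domNum = G.domNum + k) : G.synchBondage k ≤ E.card :=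
  Nat.sInf_le ⟨E, hE, hdom, rfl⟩

theorem le_synchBondage [Fintype V] {k : ℕ} {E : Finset (Sym2 V)} (hE : ↑E ⊆ G.edgeSet)
    (hdom : (G.deleteEdges E).domNum = G.domNum + k) : k ≤ G.synchBondage k :=
  le_csInf ⟨E.card, E, hE, hdom, rfl⟩ fun _ ⟨E₀, _, hdom₀, hcard₀⟩ => by
    have := G.domNum_deleteEdges_le_add_card E₀
    omega

end SimpleGraph

theorem synchBondage_tree_bounds_general {V : Type*} [Fintype V] (T : SimpleGraph V)
    (hacyc : T.IsAcyclic) (k : ℕ)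
    (hkn : k ≤ Fintype.card V - T.domNum) :
    (∃ E' : Finset (Sym2 V), ↑E' ⊆ T.edgeSet ∧ E'.card ≤ 2 * k ∧
      (T.deleteEdges ↑E').domNum = T.domNum + k) ∧
    k ≤ T.synchBondage k ∧ T.synchBondage k ≤ 2 * k := by
  obtain ⟨E, hET, hcard, hdom⟩ := hacyc.exists_deleteEdges_domNum_eq_add hkn
  exact ⟨⟨E, hET, hcard, hdom⟩, T.le_synchBondage hET hdom,
    (T.synchBondage_le hET hdom).trans hcard⟩

/-- for a tree `T` on `n` vertices and `1 ≤ k ≤ n − γ(T)`,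
`k ≤ Sb_k(T) ≤ 2k`: some set of at most `2k` edges has deletion increasing the
domination number by exactly `k`, and no set of fewer than `k` edges does. -/
theorem synchBondage_tree_bounds {V : Type*} [Fintype V] (T : SimpleGraph V)
    (hconn : T.Connected) (hacyc : T.IsAcyclic) (k : ℕ) (hk : 1 ≤ k)
    (hkn : k ≤ Fintype.card V - T.domNum) :
    (∃ E' : Finset (Sym2 V), ↑E' ⊆ T.edgeSet ∧ E'.card ≤ 2 * k ∧
      (T.deleteEdges ↑E').domNum = T.domNum + k) ∧
    k ≤ T.synchBondage k ∧ T.synchBondage k ≤ 2 * k :=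
  synchBondage_tree_bounds_general T hacyc k hkn
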